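/- arXiv:math/0204035 — 4 statements merged into one kernel-verified Lean document; each statement's English description precedes it below -/
import Mathlib

section
/- Let c be a positive integer and t an integer. Then (1/c) ∑_{λ^c=1, λ≠1} λ^{-t}/(λ-1) = t/c - floor(t/c) - 1/2 + 1/(2c), where the sum is over all nontrivial c-th roots of unity in ℂ. -/
open Complex Finset

/-!
For a `c`-th root of unity `w ≠ 1`, telescoping the weighted geometric sum gives
`1 / (w - 1) = (1 / c) ∑_{j < c} j w^j`. Substituting this for every `λ = ζ^k` and exchanging the
sums, the inner sum `∑_{k=1}^{c-1} ζ^{k (j - t)}` equals `c - 1` or `-1` according as `c ∣ j - t`,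
so the total picks out `j = t mod c` and subtracts `(1 / c) ∑_{j < c} j = (c - 1) / 2`.
-/

theorem sub_one_mul_sum_range_natCast_mul_pow {R : Type*} [CommRing R] (w : R) (n : ℕ) :
    (w - 1) * ∑ j ∈ range n, (j : R) * w ^ j = n * w ^ n - w * ∑ j ∈ range n, w ^ j := by
  induction n with
  | zero => simp
  | succ n ih =>
    rw [sum_range_succ, sum_range_succ, mul_add, ih]
    push_cast
    ring

theorem sum_range_natCast_mul_pow_of_pow_eq_one {K : Type*} [Field K] {w : K} {c : ℕ}
    (hw : w ^ c = 1) (hw1 : w ≠ 1) :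
    ∑ j ∈ range c, (j : K) * w ^ j = c / (w - 1) := by
  have hgeom : ∑ j ∈ range c, w ^ j = 0 := by rw [geom_sum_eq hw1, hw, sub_self, zero_div]
  have h := sub_one_mul_sum_range_natCast_mul_pow w c
  rw [hw, hgeom, mul_one, mul_zero, sub_zero] at h
  rw [eq_div_iff (sub_ne_zero.mpr hw1), mul_comm, h]

theorem sum_range_natCast {K : Type*} [Field K] [CharZero K] (n : ℕ) :
    ∑ j ∈ range n, (j : K) = n * (n - 1) / 2 := by
  induction n with
  | zero => simp
  | succ n ih =>
    rw [sum_range_succ, ih]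
    push_cast
    ring

theorem sum_range_ite_dvd_sub {R : Type*} [Ring R] {c : ℕ} (hc : c ≠ 0) (t : ℤ) :
    ∑ j ∈ range c, (if (c : ℤ) ∣ j - t then (j : R) else 0) = ((t % c : ℤ) : R) := by
  have hmod : 0 ≤ t % c ∧ t % c < c :=
    ⟨Int.emod_nonneg t (by exact_mod_cast hc), Int.emod_lt_of_pos t (by omega)⟩
  have hsel : ∀ j ∈ range c, ((c : ℤ) ∣ j - t ↔ j = (t % c).toNat) := by
    intro j hj
    have hjc : (j : ℤ) % c = j := Int.emod_eq_of_lt (by omega) (by simp at hj; omega)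
    rw [← Int.modEq_iff_dvd, Int.ModEq, hjc]
    omega
  rw [sum_congr rfl fun j hj => if_congr (hsel j hj) rfl rfl, sum_ite_eq',
    if_pos (mem_range.mpr (by omega)), ← Int.cast_natCast, Int.toNat_of_nonneg hmod.1]

namespace IsPrimitiveRoot

variable {K : Type*} [Field K] {ζ : K} {c : ℕ}

theorem sum_Ico_pow_zpow (hζ : IsPrimitiveRoot ζ c) (hc : c ≠ 0) (m : ℤ) :
    ∑ k ∈ Ico 1 c, (ζ ^ m) ^ k = (if (c : ℤ) ∣ m then (c : K) else 0) - 1 := by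
  have hfull : ∑ k ∈ range c, (ζ ^ m) ^ k = if (c : ℤ) ∣ m then (c : K) else 0 := by
    split_ifs with h
    · simp [(hζ.zpow_eq_one_iff_dvd m).mpr h]
    · have hpow : (ζ ^ m) ^ c = 1 := by
        rw [← zpow_natCast, ← zpow_mul, mul_comm, zpow_mul, zpow_natCast, hζ.pow_eq_one, one_zpow]
      rw [geom_sum_eq (mt (hζ.zpow_eq_one_iff_dvd m).mp h), hpow, sub_self, zero_div]
  rw [← hfull, sum_range_eq_add_Ico _ (Nat.pos_of_ne_zero hc), pow_zero]
  ring

theorem zpow_neg_div_sub_one (hζ : IsPrimitiveRoot ζ c) (hc : (c : K) ≠ 0) {k : ℕ}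
    (hk : k ∈ Ico 1 c) (t : ℤ) :
    (ζ ^ k) ^ (-t) / (ζ ^ k - 1) = ∑ j ∈ range c, (j : K) / c * (ζ ^ ((j : ℤ) - t)) ^ k := by
  obtain ⟨hk1, hkc⟩ := mem_Ico.mp hk
  have hw1 : ζ ^ k ≠ 1 := hζ.pow_ne_one_of_pos_of_lt (by omega) hkc
  have hwc : (ζ ^ k) ^ c = 1 := by rw [← pow_mul, mul_comm, pow_mul, hζ.pow_eq_one, one_pow]
  have hζ0 : ζ ≠ 0 := hζ.ne_zero (by rintro rfl; simp at hc)
  have hswap : ∀ j : ℕ, (ζ ^ ((j : ℤ) - t)) ^ k = (ζ ^ k) ^ j * (ζ ^ k) ^ (-t) := by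
    intro j
    rw [← zpow_natCast (ζ ^ ((j : ℤ) - t)), ← zpow_mul, mul_comm, zpow_mul, zpow_natCast,
      sub_eq_add_neg, zpow_add₀ (pow_ne_zero _ hζ0), zpow_natCast]
  simp_rw [hswap, ← mul_assoc, ← sum_mul, div_mul_eq_mul_div, ← sum_div,
    sum_range_natCast_mul_pow_of_pow_eq_one hwc hw1]
  field_simp

theorem sum_Ico_zpow_neg_div_sub_one [CharZero K] (hζ : IsPrimitiveRoot ζ c) (hc : c ≠ 0)
    (t : ℤ) :
    ∑ k ∈ Ico 1 c, (ζ ^ k) ^ (-t) / (ζ ^ k - 1) = ((t % c : ℤ) : K) - (c - 1) / 2 := by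
  have hcK : (c : K) ≠ 0 := Nat.cast_ne_zero.mpr hc
  calc ∑ k ∈ Ico 1 c, (ζ ^ k) ^ (-t) / (ζ ^ k - 1)
      = ∑ j ∈ range c, (j : K) / c * ∑ k ∈ Ico 1 c, (ζ ^ ((j : ℤ) - t)) ^ k := by
        rw [sum_congr rfl fun k hk => hζ.zpow_neg_div_sub_one hcK hk t, sum_comm]
        simp_rw [mul_sum]
    _ = ∑ j ∈ range c, ((if (c : ℤ) ∣ j - t then (j : K) else 0) - (j : K) / c) := by
        refine sum_congr rfl fun j _ => ?_
        rw [hζ.sum_Ico_pow_zpow hc, mul_sub, mul_one, mul_ite, mul_zero, div_mul_cancel₀ _ hcK]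
    _ = ((t % c : ℤ) : K) - (c - 1) / 2 := by
        rw [sum_sub_distrib, sum_range_ite_dvd_sub hc, ← sum_div, sum_range_natCast]
        field_simp

end IsPrimitiveRoot

theorem sawtooth_fourier_expansion (c : ℕ) (hc : 0 < c) (t : ℤ) :
    (1 / (c : ℂ)) * ∑ k ∈ Finset.Ico 1 c,
        (Complex.exp (2 * Real.pi * Complex.I * k / c)) ^ (-t) /
          (Complex.exp (2 * Real.pi * Complex.I * k / c) - 1) =
      (t : ℂ) / c - (⌊(t : ℚ) / c⌋ : ℂ) - 1 / 2 + 1 / (2 * c) := by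
  have hexp : ∀ k : ℕ, exp (2 * Real.pi * I * k / c) = exp (2 * Real.pi * I / c) ^ k := by
    intro k
    rw [← exp_nat_mul]
    ring_nf
  have hc0 : (c : ℂ) ≠ 0 := Nat.cast_ne_zero.mpr hc.ne'
  simp_rw [hexp]
  rw [(isPrimitiveRoot_exp c hc.ne').sum_Ico_zpow_neg_div_sub_one hc.ne',
    Rat.floor_intCast_div_natCast, Int.emod_def]
  push_cast
  field_simp
  ring
end

section
/- Let a, b, c be pairwise coprime positive integers and t an integer. Then σ_t(a,b;c) = ∑_{m=0}^{c-1} ((a^{-1}(m-t)/c)) ((-b^{-1} m/c)) - 1/(4c), where a^{-1}, b^{-1} are inverses of a, b modulo c. -/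
/-! For a nontrivial `c`-th root of unity `λ` one has `1 / (λ - 1) = (1 / c) ∑_{j < c} j λ^j`.
Substituting this for both factors of the denominator and summing over all `c`-th roots of unity,
orthogonality of characters of `ℤ/c` keeps only the pairs `(m, n)` with `t + a m + b n ≡ 0`,
i.e. `m ≡ -a⁻¹ (t + b n)`, which gives `c ∑_n n · (-a⁻¹ (t + b n) mod c)`; the trivial root
contributes `(c (c - 1) / 2)²`. Expanding the products of sawtooth values gives the same sum of
products of residues, while the linear terms are sums of `((x / c))` over an affine image of `ℤ/c`,
hence equal to `-1/2`. -/

open Complex Finset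

/-- The sawtooth function `((x)) = x - ⌊x⌋ - 1/2`. -/
def saw (x : ℚ) : ℚ := x - ⌊x⌋ - 1 / 2

theorem sub_one_mul_sum_range_mul_pow {R : Type*} [CommRing R] (ζ : R) (n : ℕ) :
    (ζ - 1) * ∑ j ∈ range n, (j : R) * ζ ^ j = n * ζ ^ n - ζ * ∑ j ∈ range n, ζ ^ j := by
  induction n with
  | zero => simp
  | succ n ih =>
    rw [sum_range_succ, sum_range_succ, mul_add, ih]
    push_cast
    ring

theorem sum_range_mul_pow_eq_div {K : Type*} [Field K] {n : ℕ} {ζ : K} (hζn : ζ ^ n = 1)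
    (hζ : ζ ≠ 1) : ∑ j ∈ range n, (j : K) * ζ ^ j = n / (ζ - 1) := by
  have hζ' : ζ - 1 ≠ 0 := sub_ne_zero.mpr hζ
  rw [eq_div_iff hζ', mul_comm, sub_one_mul_sum_range_mul_pow, hζn, geom_sum_eq hζ, hζn]
  simp

theorem Fintype.sum_comp_mul_add {R M : Type*} [CommRing R] [Fintype R] [AddCommMonoid M]
    {u u' : R} (hu : u' * u = 1) (s : R) (f : R → M) : ∑ x, f (u * x + s) = ∑ x, f x := by
  refine Fintype.sum_bijective _ (Function.bijective_iff_has_inverse.mpr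
    ⟨fun y => u' * (y - s), fun x => ?_, fun y => ?_⟩) _ _ fun _ => rfl
  · linear_combination x * hu
  · linear_combination (y - s) * hu

namespace ZMod

variable {c : ℕ} [NeZero c]

theorem sum_range_natCast {M : Type*} [AddCommMonoid M] (f : ZMod c → M) :
    ∑ i ∈ range c, f i = ∑ x, f x :=
  Finset.sum_nbij' (fun i => (i : ZMod c)) val (by simp) (by simp [val_lt])
    (fun i hi => val_cast_of_lt (mem_range.mp hi)) (by simp) (by simp)

theorem sum_comp_val {M : Type*} [AddCommMonoid M] (f : ℕ → M) :
    ∑ x : ZMod c, f x.val = ∑ i ∈ range c, f i :=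
  Finset.sum_nbij' val (fun i => (i : ZMod c)) (by simp [val_lt]) (by simp)
    (by simp) (fun i hi => val_cast_of_lt (mem_range.mp hi)) (by simp)

theorem sum_Ico_one_natCast {M : Type*} [AddCommGroup M] (f : ZMod c → M) :
    ∑ k ∈ Ico 1 c, f k = ∑ x ∈ univ.erase 0, f x := by
  have h := sum_range_natCast f
  rw [range_eq_Ico, sum_eq_sum_Ico_succ_bot (NeZero.pos c), ← add_sum_erase _ _ (mem_univ 0),
    Nat.cast_zero] at h
  exact add_left_cancel h

theorem sum_cast_val {K : Type*} [Field K] [CharZero K] :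
    ∑ x : ZMod c, (x.val : K) = c * (c - 1) / 2 := by
  rw [sum_comp_val (fun i => (i : K)), eq_div_iff two_ne_zero]
  have := congrArg (Nat.cast : ℕ → K) (sum_range_id_mul_two c)
  push_cast [Nat.cast_sub (NeZero.one_le)] at this
  exact this

theorem exp_two_pi_I_natCast_div_zpow (k : ℕ) (t : ℤ) :
    exp (2 * Real.pi * I * k / c) ^ t = stdAddChar ((k : ZMod c) * (t : ZMod c)) := by
  rw [mul_comm (k : ZMod c), ← zsmul_eq_mul, AddChar.map_zsmul_eq_zpow, stdAddChar_apply,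
    toCircle_natCast]

theorem sum_stdAddChar_mul (N : ZMod c) :
    ∑ k, stdAddChar (k * N) = if N = 0 then (c : ℂ) else 0 := by
  simpa using AddChar.sum_mulShift N (isPrimitive_stdAddChar c)

theorem sum_val_mul_stdAddChar {y : ZMod c} (hy : y ≠ 0) :
    ∑ j : ZMod c, (j.val : ℂ) * stdAddChar (y * j) = c / (stdAddChar y - 1) := by
  have hpow : ∀ n : ℕ, stdAddChar (y * (n : ZMod c)) = stdAddChar y ^ n := fun n => by
    rw [mul_comm, ← nsmul_eq_mul, AddChar.map_nsmul_eq_pow]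
  have hne : stdAddChar y ≠ 1 := by
    rwa [Ne, ← AddChar.map_zero_eq_one (stdAddChar (N := c)), injective_stdAddChar.eq_iff]
  calc ∑ j : ZMod c, (j.val : ℂ) * stdAddChar (y * j)
      = ∑ j : ZMod c, (j.val : ℂ) * stdAddChar y ^ j.val := by
        simp_rw [← hpow, natCast_zmod_val]
    _ = c / (stdAddChar y - 1) := by
        rw [sum_comp_val (fun j => (j : ℂ) * stdAddChar y ^ j), sum_range_mul_pow_eq_div
          (by rw [← hpow, natCast_self, mul_zero, AddChar.map_zero_eq_one]) hne]

theorem sum_stdAddChar_mul_sum_val_mul_sum_val {t u u' v : ZMod c} (hu : u' * u = 1) :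
    ∑ k, stdAddChar (k * t) * (∑ x, (x.val : ℂ) * stdAddChar (k * u * x)) *
        (∑ y, (y.val : ℂ) * stdAddChar (k * v * y))
      = c * ∑ y, ((-(u' * (t + v * y))).val * y.val : ℂ) := by
  have hsolve : ∀ x y : ZMod c, t + u * x + v * y = 0 ↔ x = -(u' * (t + v * y)) := by
    refine fun x y => ⟨fun h => ?_, fun h => ?_⟩
    · linear_combination (-x) * hu + u' * h
    · linear_combination u * h - (t + v * y) * hu
  calc _ = ∑ k, ∑ x : ZMod c, ∑ y : ZMod c,
        (x.val * y.val : ℂ) * stdAddChar (k * (t + u * x + v * y)) := by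
        refine sum_congr rfl fun k _ => ?_
        rw [mul_assoc, sum_mul_sum, mul_sum]
        refine sum_congr rfl fun x _ => ?_
        rw [mul_sum]
        refine sum_congr rfl fun y _ => ?_
        rw [mul_add, mul_add, AddChar.map_add_eq_mul, AddChar.map_add_eq_mul, ← mul_assoc k,
          ← mul_assoc k]
        ring
    _ = ∑ x : ZMod c, ∑ y : ZMod c,
        (x.val * y.val : ℂ) * ∑ k, stdAddChar (k * (t + u * x + v * y)) := by
        rw [sum_comm]
        simp_rw [mul_sum]
        exact sum_congr rfl fun x _ => sum_comm
    _ = c * ∑ y, ((-(u' * (t + v * y))).val * y.val : ℂ) := by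
        simp_rw [sum_stdAddChar_mul, hsolve, mul_ite, mul_zero]
        rw [sum_comm, mul_sum]
        refine sum_congr rfl fun y _ => ?_
        rw [Fintype.sum_ite_eq']
        ring

theorem sq_mul_sum_stdAddChar_div {t u u' v v' : ZMod c} (hu : u' * u = 1) (hv : v' * v = 1) :
    (c : ℂ) ^ 2 * ∑ k ∈ univ.erase 0,
        stdAddChar (k * t) / ((stdAddChar (k * u) - 1) * (stdAddChar (k * v) - 1))
      = c * ∑ y, ((-(u' * (t + v * y))).val * y.val : ℂ) - (c * (c - 1) / 2) ^ 2 := by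
  have hunit : ∀ {w w' k : ZMod c}, w' * w = 1 → k ≠ 0 → k * w ≠ 0 := fun hw hk =>
    ((IsUnit.of_mul_eq_one_right _ hw).mul_left_eq_zero).not.mpr hk
  rw [mul_sum, ← sum_stdAddChar_mul_sum_val_mul_sum_val hu, ← sum_erase_add _ _ (mem_univ 0)]
  simp only [zero_mul, AddChar.map_zero_eq_one, one_mul, mul_one]
  rw [sum_cast_val, ← sq, add_sub_cancel_right]
  refine sum_congr rfl fun k hk => ?_
  rw [sum_val_mul_stdAddChar (hunit hu (ne_of_mem_erase hk)),
    sum_val_mul_stdAddChar (hunit hv (ne_of_mem_erase hk))]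
  simp only [div_eq_mul_inv, mul_inv]
  ring

theorem sum_val_div_sub_half : ∑ x : ZMod c, ((x.val : ℚ) / c - 1 / 2) = -1 / 2 := by
  have hc : (c : ℚ) ≠ 0 := NeZero.ne _
  rw [sum_sub_distrib, ← sum_div, sum_cast_val, sum_const, card_univ, card]
  field_simp
  ring

theorem sum_val_div_sub_half_mul {t u u' v v' : ZMod c} (hu : u' * u = 1) (hv : v' * v = 1) :
    ∑ y : ZMod c, (((-(u' * (t + v * y))).val : ℚ) / c - 1 / 2) * ((y.val : ℚ) / c - 1 / 2)
      = (∑ y : ZMod c, ((-(u' * (t + v * y))).val * y.val : ℚ)) / c ^ 2 + 1 / 2 - c / 4 := by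
  have hc : (c : ℚ) ≠ 0 := NeZero.ne _
  have haffine : ∑ y : ZMod c, (((-(u' * (t + v * y))).val : ℚ) / c - 1 / 2) = -1 / 2 := by
    simp_rw [show ∀ y, -(u' * (t + v * y)) = -(u' * v) * y + -(u' * t) from fun y => by ring]
    rw [Fintype.sum_comp_mul_add (u' := -(v' * u)) (by linear_combination v' * v * hu + hv) _
      (fun x => (x.val : ℚ) / c - 1 / 2), sum_val_div_sub_half]
  -- expanding around the sawtooth values makes both linear terms sums of sawtooth values
  have hexpand : ∀ α β : ℚ, (α / c - 1 / 2) * (β / c - 1 / 2)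
      = α * β / c ^ 2 - ((α / c - 1 / 2) + (β / c - 1 / 2)) / 2 - 1 / 4 := fun α β => by
    field_simp; ring
  rw [sum_congr rfl fun y _ => hexpand _ _, sum_sub_distrib, sum_sub_distrib, ← sum_div, ← sum_div,
    sum_add_distrib, haffine, sum_val_div_sub_half, sum_const, card_univ, card]
  ring

end ZMod

theorem saw_intCast_div {c : ℕ} [NeZero c] (N : ℤ) :
    saw ((N : ℚ) / c) = ((N : ZMod c).val : ℚ) / c - 1 / 2 := by
  have hc : (c : ℚ) ≠ 0 := NeZero.ne _
  have hval : ((N : ZMod c).val : ℤ) = N - c * (N / c) := by rw [ZMod.val_intCast, Int.emod_def]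
  rw [saw, Rat.floor_intCast_div_natCast,
    show ((N : ZMod c).val : ℚ) = (((N : ZMod c).val : ℤ) : ℚ) by norm_cast, hval]
  push_cast
  field_simp

theorem sum_range_saw_mul_saw {c : ℕ} [NeZero c] {b : ZMod c} {b' : ℤ} (hb : b' * b = 1)
    (a' t : ℤ) :
    ∑ m ∈ range c, saw (a' * (m - t) / c) * saw (-b' * m / c)
      = ∑ y : ZMod c,
          (((-(a' * (t + b * y))).val : ℚ) / c - 1 / 2) * ((y.val : ℚ) / c - 1 / 2) := by
  have hcast : ∀ m : ℕ, saw (a' * (m - t) / c) * saw (-b' * m / c)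
      = (((a' * (m - t) : ZMod c)).val / c - 1 / 2) * (((-b' * m : ZMod c)).val / c - 1 / 2) := by
    intro m
    rw [show (a' : ℚ) * (m - t) / c = ((a' * (m - t) : ℤ) : ℚ) / c by push_cast; ring,
      show -(b' : ℚ) * m / c = ((-b' * m : ℤ) : ℚ) / c by push_cast; ring,
      saw_intCast_div, saw_intCast_div]
    push_cast
    rfl
  rw [sum_congr rfl fun m _ => hcast m, ZMod.sum_range_natCast
    (fun x : ZMod c => (((a' * (x - t)).val : ℚ) / c - 1 / 2) * (((-b' * x).val : ℚ) / c - 1 / 2)),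
    ← Fintype.sum_comp_mul_add (u := -b) (u' := -b') (by linear_combination hb) 0]
  refine sum_congr rfl fun y _ => ?_
  rw [show (a' : ZMod c) * (-b * y + 0 - t) = -(a' * (t + b * y)) by ring,
    show -(b' : ZMod c) * (-b * y + 0) = y by linear_combination y * hb]

theorem fourier_dedekind_two_args_as_dedekind_rademacher_general (a b c : ℕ)
    (hc : 0 < c)
    (a' b' t : ℤ) (ha' : (a : ℤ) * a' ≡ 1 [ZMOD (c : ℤ)])
    (hb' : (b : ℤ) * b' ≡ 1 [ZMOD (c : ℤ)]) :
    (1 / (c : ℂ)) * ∑ k ∈ Finset.Ico 1 c,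
        (Complex.exp (2 * Real.pi * Complex.I * k / c)) ^ t /
          (((Complex.exp (2 * Real.pi * Complex.I * k / c)) ^ (a : ℤ) - 1) *
            ((Complex.exp (2 * Real.pi * Complex.I * k / c)) ^ (b : ℤ) - 1)) =
      ((∑ m ∈ Finset.range c,
          saw ((a' : ℚ) * ((m : ℚ) - t) / c) * saw (-(b' : ℚ) * m / c) : ℚ) : ℂ)
        - 1 / (4 * c) := by
  have : NeZero c := ⟨hc.ne'⟩
  have ha : (a' : ZMod c) * a = 1 := by
    simpa [mul_comm] using (ZMod.intCast_eq_intCast_iff _ _ _).mpr ha'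
  have hb : (b' : ZMod c) * b = 1 := by
    simpa [mul_comm] using (ZMod.intCast_eq_intCast_iff _ _ _).mpr hb'
  have hc₀ : (c : ℂ) ≠ 0 := NeZero.ne _
  have hσ := ZMod.sq_mul_sum_stdAddChar_div (t := t) ha hb
  rw [mul_comm, ← eq_div_iff (pow_ne_zero 2 hc₀)] at hσ
  simp only [ZMod.exp_two_pi_I_natCast_div_zpow, Int.cast_natCast]
  rw [ZMod.sum_Ico_one_natCast (fun k : ZMod c => ZMod.stdAddChar (k * (t : ZMod c)) /
      ((ZMod.stdAddChar (k * (a : ZMod c)) - 1) * (ZMod.stdAddChar (k * (b : ZMod c)) - 1))),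
    hσ, sum_range_saw_mul_saw hb, ZMod.sum_val_div_sub_half_mul ha hb]
  push_cast
  field_simp
  ring

theorem fourier_dedekind_two_args_as_dedekind_rademacher (a b c : ℕ)
    (ha : 0 < a) (hb : 0 < b) (hc : 0 < c)
    (hab : Nat.Coprime a b) (hac : Nat.Coprime a c) (hbc : Nat.Coprime b c)
    (a' b' t : ℤ) (ha' : (a : ℤ) * a' ≡ 1 [ZMOD (c : ℤ)])
    (hb' : (b : ℤ) * b' ≡ 1 [ZMOD (c : ℤ)]) :
    (1 / (c : ℂ)) * ∑ k ∈ Finset.Ico 1 c,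
        (Complex.exp (2 * Real.pi * Complex.I * k / c)) ^ t /
          (((Complex.exp (2 * Real.pi * Complex.I * k / c)) ^ (a : ℤ) - 1) *
            ((Complex.exp (2 * Real.pi * Complex.I * k / c)) ^ (b : ℤ) - 1)) =
      ((∑ m ∈ Finset.range c,
          saw ((a' : ℚ) * ((m : ℚ) - t) / c) * saw (-(b' : ℚ) * m / c) : ℚ) : ℂ)
        - 1 / (4 * c) :=
  fourier_dedekind_two_args_as_dedekind_rademacher_general a b c hc a' b' t ha' hb'
end

section
/- For positive integers a and c with gcd(a,c)=1, σ_0(a,1;c) := (1/c) ∑_{λ^c=1, λ≠1} 1/((λ^a - 1)(λ-1)) = 1/4 - 1/(4c) - s(a,c), where s(a,c) is the classical Dedekind sum s(a,c) = ∑_{k=1}^{c-1} ((k/c))((ka/c)). -/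
open Complex Finset

/-- The classical sawtooth function: `((x)) = x - ⌊x⌋ - 1/2` for `x ∉ ℤ`, and `0` for `x ∈ ℤ`. -/
def sawZ (x : ℚ) : ℚ := if x.den = 1 then 0 else x - ⌊x⌋ - 1 / 2

/-- The classical Dedekind sum `s(a,c) = ∑_{k=1}^{c-1} ((k/c))((ka/c))`. -/
def dedekindSum (a c : ℕ) : ℚ :=
  ∑ k ∈ Finset.Ico 1 c, sawZ ((k : ℚ) / c) * sawZ ((k : ℚ) * a / c)

/-!
For a nontrivial `c`-th root of unity `μ` one has `(μ - 1)⁻¹ = c⁻¹ ∑_{m<c} m μ^m`. Multiplying the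
expansions of `(μ^a - 1)⁻¹` and `(μ - 1)⁻¹` and summing over all `μ = ζ^k`, orthogonality of
characters keeps only the pairs `(m, n)` with `a m + n ≡ 0 (mod c)`, i.e. `n = c - (a m mod c)`.
So the Fourier side is a polynomial in `c` and `S = ∑_{k<c} k (a k mod c)`. Expanding the sawtooth
functions expresses `s(a, c)` through the same `S`, because `k ↦ a k mod c` permutes `{1, …, c-1}`.
-/

lemma sawZ_natCast_div {N c : ℕ} (hc : c ≠ 0) (hN : ¬ c ∣ N) :
    sawZ (N / c) = (N % c : ℕ) / c - 1 / 2 := by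
  rw [sawZ, if_neg (by rwa [Rat.den_div_natCast_eq_one_iff _ _ hc]),
    Rat.floor_natCast_div_natCast]
  have hc' : (c : ℚ) ≠ 0 := by exact_mod_cast hc
  have hdiv : (c : ℚ) * (N / c : ℕ) + (N % c : ℕ) = N := by exact_mod_cast Nat.div_add_mod N c
  rw [sub_left_inj, ← Int.natCast_div, Int.cast_natCast, ← hdiv]
  field_simp
  ring

lemma Nat.Coprime.not_dvd_mul_of_mem_Ico {a c k : ℕ} (hac : a.Coprime c) (hk : k ∈ Ico 1 c) :
    ¬ c ∣ a * k := by
  rw [mem_Ico] at hk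
  exact fun h ↦ Nat.not_dvd_of_pos_of_lt hk.1 hk.2 (hac.symm.dvd_of_dvd_mul_left h)

lemma Nat.Coprime.sum_Ico_mul_mod {M : Type*} [AddCommMonoid M] {a c : ℕ} (hac : a.Coprime c)
    (f : ℕ → M) : ∑ k ∈ Ico 1 c, f (a * k % c) = ∑ k ∈ Ico 1 c, f k := by
  have hmaps : Set.MapsTo (fun k ↦ a * k % c) (Ico 1 c : Set ℕ) (Ico 1 c) := by
    intro k hk
    have hndvd := hac.not_dvd_mul_of_mem_Ico hk
    simp only [coe_Ico, Set.mem_Ico] at hk ⊢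
    exact ⟨Nat.pos_of_ne_zero (mt Nat.dvd_of_mod_eq_zero hndvd), Nat.mod_lt _ (by omega)⟩
  have hinj : Set.InjOn (fun k ↦ a * k % c) (Ico 1 c : Set ℕ) := by
    intro k hk l hl hkl
    simp only [coe_Ico, Set.mem_Ico] at hk hl
    have := Nat.ModEq.cancel_left_of_coprime (Nat.coprime_comm.mp hac) hkl
    rwa [Nat.ModEq, Nat.mod_eq_of_lt hk.2, Nat.mod_eq_of_lt hl.2] at this
  exact sum_nbij _ hmaps hinj (surjOn_of_injOn_of_card_le _ hmaps hinj le_rfl) fun _ _ ↦ rfl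

lemma sum_Ico_one_eq_sum_range {M : Type*} [AddCommMonoid M] {f : ℕ → M} (hf : f 0 = 0) (c : ℕ) :
    ∑ k ∈ Ico 1 c, f k = ∑ k ∈ range c, f k :=
  sum_subset (fun k hk ↦ by simp only [mem_Ico, mem_range] at hk ⊢; omega) fun k hk hk' ↦ by
    obtain rfl : k = 0 := by simp only [mem_Ico, mem_range, not_and, not_lt] at hk hk'; omega
    exact hf

lemma sq_mul_dedekindSum {a c : ℕ} (hac : a.Coprime c) :
    (c : ℚ) ^ 2 * dedekindSum a c = ∑ k ∈ Ico 1 c, (k : ℚ) * (a * k % c : ℕ)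
      - c * ∑ k ∈ range c, (k : ℚ) + c ^ 2 * (c - 1) / 4 := by
  obtain rfl | hc := eq_or_ne c 0
  · simp [dedekindSum]
  have hc' : (c : ℚ) ≠ 0 := by exact_mod_cast hc
  have hterm : ∀ k ∈ Ico 1 c, (c : ℚ) ^ 2 * (sawZ (k / c) * sawZ (k * a / c)) =
      k * (a * k % c : ℕ) - c / 2 * (k + (a * k % c : ℕ)) + c ^ 2 / 4 := by
    intro k hk
    have hkc : ¬ c ∣ k := Nat.not_dvd_of_pos_of_lt (mem_Ico.mp hk).1 (mem_Ico.mp hk).2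
    rw [show (k : ℚ) * a = (a * k : ℕ) by push_cast; ring, sawZ_natCast_div hc hkc,
      sawZ_natCast_div hc (hac.not_dvd_mul_of_mem_Ico hk), Nat.mod_eq_of_lt (mem_Ico.mp hk).2]
    field_simp
    ring
  rw [dedekindSum, mul_sum, sum_congr rfl hterm, sum_add_distrib, sum_sub_distrib, ← mul_sum,
    sum_add_distrib, hac.sum_Ico_mul_mod (fun k ↦ (k : ℚ)),
    sum_Ico_one_eq_sum_range (f := fun k ↦ (k : ℚ)) Nat.cast_zero, sum_const, Nat.card_Ico,
    nsmul_eq_mul, Nat.cast_sub (Nat.one_le_iff_ne_zero.mpr hc)]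
  ring

lemma dvd_add_iff_eq_sub_mod {c j n : ℕ} (hj : ¬ c ∣ j) (hn : n < c) :
    c ∣ j + n ↔ n = c - j % c := by
  have hr : 0 < j % c := Nat.pos_of_ne_zero (mt Nat.dvd_of_mod_eq_zero hj)
  have hrc : j % c < c := Nat.mod_lt _ (by omega)
  have hsplit : j + n = c * (j / c) + (j % c + n) := by have := Nat.div_add_mod j c; omega
  rw [hsplit, Nat.dvd_add_right (dvd_mul_right c _)]
  constructor
  · intro h
    have := Nat.eq_of_dvd_of_lt_two_mul (by omega) h (by omega)
    omega
  · rintro rfl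
    rw [Nat.add_sub_cancel' hrc.le]

lemma sum_range_ite_dvd_add {c j : ℕ} (hj : ¬ c ∣ j) :
    ∑ n ∈ range c, (if c ∣ j + n then n else 0) = c - j % c := by
  have hr : 0 < j % c := Nat.pos_of_ne_zero (mt Nat.dvd_of_mod_eq_zero hj)
  rw [sum_congr rfl fun n hn ↦ if_congr (dvd_add_iff_eq_sub_mod hj (mem_range.mp hn)) rfl rfl,
    sum_ite_eq', ite_eq_left_iff, mem_range]
  omega

section RootsOfUnity

variable {K : Type*} [Field K]

lemma sub_one_mul_sum_range_mul_pow_s6 {μ : K} {c : ℕ} (hμc : μ ^ c = 1) (hμ : μ ≠ 1) :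
    (μ - 1) * ∑ m ∈ range c, (m : K) * μ ^ m = c := by
  have hgeom : ∑ m ∈ range c, μ ^ (m + 1) = 0 := by
    simp_rw [pow_succ', ← mul_sum, geom_sum_eq hμ, hμc, sub_self, zero_div, mul_zero]
  calc (μ - 1) * ∑ m ∈ range c, (m : K) * μ ^ m
      = ∑ m ∈ range c, (((m + 1 : ℕ) : K) * μ ^ (m + 1) - (m : K) * μ ^ m)
          - ∑ m ∈ range c, μ ^ (m + 1) := by
        rw [mul_sum, ← sum_sub_distrib]
        exact sum_congr rfl fun m _ ↦ by push_cast; ring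
    _ = c := by rw [sum_range_sub (fun m ↦ (m : K) * μ ^ m), hgeom, hμc]; simp

lemma IsPrimitiveRoot.sum_range_pow_mul {ζ : K} {c : ℕ} (hζ : IsPrimitiveRoot ζ c) (j : ℕ) :
    ∑ k ∈ range c, ζ ^ (k * j) = if c ∣ j then (c : K) else 0 := by
  simp_rw [mul_comm _ j, pow_mul]
  split_ifs with h
  · simp [(hζ.pow_eq_one_iff_dvd j).mpr h]
  · rw [geom_sum_eq (mt (hζ.pow_eq_one_iff_dvd j).mp h), ← pow_mul, mul_comm, pow_mul,
      hζ.pow_eq_one, one_pow, sub_self, zero_div]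

lemma IsPrimitiveRoot.sum_range_mul_sum_range {ζ : K} {c : ℕ} (hζ : IsPrimitiveRoot ζ c)
    (a : ℕ) :
    ∑ k ∈ range c, (∑ m ∈ range c, (m : K) * ((ζ ^ k) ^ a) ^ m) *
        ∑ n ∈ range c, (n : K) * (ζ ^ k) ^ n =
      c * ∑ m ∈ range c, ∑ n ∈ range c, if c ∣ a * m + n then (m * n : K) else 0 := by
  have hpow : ∀ k m n : ℕ, ((ζ ^ k) ^ a) ^ m * (ζ ^ k) ^ n = ζ ^ (k * (a * m + n)) := by
    intro k m n
    rw [← pow_mul, ← pow_mul, ← pow_mul, ← pow_add]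
    ring_nf
  calc _ = ∑ m ∈ range c, ∑ n ∈ range c, (m * n : K) * ∑ k ∈ range c, ζ ^ (k * (a * m + n)) := by
        simp_rw [sum_mul_sum, mul_sum]
        rw [sum_comm]
        refine sum_congr rfl fun m _ ↦ ?_
        rw [sum_comm]
        refine sum_congr rfl fun n _ ↦ sum_congr rfl fun k _ ↦ ?_
        rw [← hpow]
        ring
    _ = _ := by
        simp_rw [hζ.sum_range_pow_mul, mul_sum, mul_ite, mul_zero, mul_comm]

lemma Nat.Coprime.sum_range_sum_range_ite_dvd {a c : ℕ} (hac : a.Coprime c) :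
    ∑ m ∈ range c, ∑ n ∈ range c, (if c ∣ a * m + n then (m * n : K) else 0) =
      c * ∑ m ∈ range c, (m : K) - ∑ m ∈ Ico 1 c, (m : K) * (a * m % c : ℕ) := by
  rw [← sum_Ico_one_eq_sum_range (by simp), ← sum_Ico_one_eq_sum_range Nat.cast_zero, mul_sum,
    ← sum_sub_distrib]
  refine sum_congr rfl fun m hm ↦ ?_
  have hsum := congrArg (Nat.cast : ℕ → K) (sum_range_ite_dvd_add (hac.not_dvd_mul_of_mem_Ico hm))
  have hc : 0 < c := by simp only [mem_Ico] at hm; omega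
  push_cast [Nat.cast_ite, Nat.cast_sub (Nat.mod_lt (a * m) hc).le] at hsum
  simp_rw [← mul_ite_zero, ← mul_sum, hsum]
  ring

lemma IsPrimitiveRoot.sq_mul_sum_Ico_one_div {ζ : K} {a c : ℕ} (hζ : IsPrimitiveRoot ζ c)
    (hac : a.Coprime c) :
    (c : K) ^ 2 * ∑ k ∈ Ico 1 c, 1 / (((ζ ^ k) ^ a - 1) * (ζ ^ k - 1)) =
      c * (c * ∑ m ∈ range c, (m : K) - ∑ m ∈ Ico 1 c, (m : K) * (a * m % c : ℕ)) -
        (∑ m ∈ range c, (m : K)) ^ 2 := by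
  obtain rfl | hc := eq_or_ne c 0
  · simp
  set P : K → K := fun μ ↦ ∑ m ∈ range c, (m : K) * μ ^ m
  have hP : ∀ k ∈ Ico 1 c, (c : K) ^ 2 * (1 / (((ζ ^ k) ^ a - 1) * (ζ ^ k - 1))) =
      P ((ζ ^ k) ^ a) * P (ζ ^ k) := by
    intro k hk
    have hck : ¬ c ∣ k := Nat.not_dvd_of_pos_of_lt (mem_Ico.mp hk).1 (mem_Ico.mp hk).2
    have hroot : ∀ j, (ζ ^ j) ^ c = 1 := fun j ↦ by
      rw [← pow_mul, mul_comm, pow_mul, hζ.pow_eq_one, one_pow]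
    have hk1 : ζ ^ k ≠ 1 := mt (hζ.pow_eq_one_iff_dvd k).mp hck
    have hka1 : (ζ ^ k) ^ a ≠ 1 := by
      rw [← pow_mul, mul_comm]
      exact mt (hζ.pow_eq_one_iff_dvd _).mp (hac.not_dvd_mul_of_mem_Ico hk)
    have hA := sub_one_mul_sum_range_mul_pow_s6
      (by rw [← pow_mul, mul_comm, pow_mul, hroot, one_pow]) hka1
    have hB := sub_one_mul_sum_range_mul_pow_s6 (hroot k) hk1
    rw [← sub_ne_zero] at hk1 hka1
    rw [sq]
    nth_rw 1 [← hA]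
    rw [← hB]
    field_simp
    rfl
  -- the full sum over `k < c` exceeds ours by the `k = 0` term `P 1 * P 1`
  rw [mul_sum, sum_congr rfl hP, ← hac.sum_range_sum_range_ite_dvd, ← hζ.sum_range_mul_sum_range,
    range_eq_Ico, sum_eq_sum_Ico_succ_bot (Nat.pos_of_ne_zero hc)]
  simp [P, sq]

end RootsOfUnity

theorem fourier_dedekind_eq_dedekind_sum_general (a c : ℕ) (hc : 0 < c)
    (hac : Nat.Coprime a c) :
    (1 / (c : ℂ)) * ∑ k ∈ Finset.Ico 1 c,
        1 / (((Complex.exp (2 * Real.pi * Complex.I * k / c)) ^ (a : ℤ) - 1) *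
              (Complex.exp (2 * Real.pi * Complex.I * k / c) - 1)) =
      1 / 4 - 1 / (4 * c) - (dedekindSum a c : ℂ) := by
  set ζ := exp (2 * Real.pi * I / c)
  have hexp (k : ℕ) : exp (2 * Real.pi * I * k / c) = ζ ^ k := by
    rw [← exp_nat_mul]
    ring_nf
  have hfourier := (isPrimitiveRoot_exp c hc.ne').sq_mul_sum_Ico_one_div hac
  have hdedekind : (c : ℂ) ^ 2 * dedekindSum a c = ∑ k ∈ Ico 1 c, (k : ℂ) * (a * k % c : ℕ)
      - c * ∑ k ∈ range c, (k : ℂ) + c ^ 2 * (c - 1) / 4 := by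
    simpa using congrArg (Rat.cast : ℚ → ℂ) (sq_mul_dedekindSum hac)
  have hgauss : (∑ k ∈ range c, (k : ℂ)) * 2 = c * (c - 1) := by
    rw [← Nat.cast_sum, ← Nat.cast_ofNat, ← Nat.cast_mul, sum_range_id_mul_two, Nat.cast_mul,
      Nat.cast_pred hc]
  simp only [hexp, zpow_natCast]
  generalize ∑ k ∈ Ico 1 c, 1 / (((ζ ^ k) ^ a - 1) * (ζ ^ k - 1)) = X at hfourier ⊢
  generalize (dedekindSum a c : ℂ) = D at hdedekind ⊢
  have hc' : (c : ℂ) ≠ 0 := by exact_mod_cast hc.ne'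
  field_simp
  refine mul_left_cancel₀ (pow_ne_zero 2 hc') ?_
  linear_combination 4 * hfourier + 4 * c * hdedekind
    - (2 * ∑ k ∈ range c, (k : ℂ) + c * (c - 1)) * hgauss

theorem fourier_dedekind_eq_dedekind_sum (a c : ℕ) (ha : 0 < a) (hc : 0 < c)
    (hac : Nat.Coprime a c) :
    (1 / (c : ℂ)) * ∑ k ∈ Finset.Ico 1 c,
        1 / (((Complex.exp (2 * Real.pi * Complex.I * k / c)) ^ (a : ℤ) - 1) *
              (Complex.exp (2 * Real.pi * Complex.I * k / c) - 1)) =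
      1 / 4 - 1 / (4 * c) - (dedekindSum a c : ℂ) :=
  fourier_dedekind_eq_dedekind_sum_general a c hc hac
end

section
/- For a positive integer c and integer t, the Fourier-Dedekind sum σ_t(c_1,...,c_n;c) is a rational number. -/
open Complex Finset

/-- The Fourier–Dedekind sum
`σ_t(c_1,…,c_n; c) = (1/c) ∑_{λ^c=1, λ≠1} λ^t / ∏_i (λ^{c_i} - 1)`. -/
noncomputable def fourierDedekindSum (t : ℤ) {n : ℕ} (cs : Fin n → ℤ) (c : ℕ) : ℂ :=
  (1 / (c : ℂ)) * ∑ k ∈ Finset.Ico 1 c,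
    (Complex.exp (2 * Real.pi * Complex.I * k / c)) ^ t /
      ∏ i, ((Complex.exp (2 * Real.pi * Complex.I * k / c)) ^ (cs i) - 1)

/-!
For a field `K` put `S_K = ∑_{λ^c = 1, λ ≠ 1} λ^t / ∏ (λ^{c_i} - 1)`. If `K` contains a primitive
`c`-th root of unity, any field embedding `K → L` maps the `c` roots of unity of `K` bijectively
onto those of `L` (there are at most `c` of them), so it carries `S_K` to `S_L`. For
`K = ℚ(ζ_c)` this makes `S_K` fixed by `Gal(K/ℚ)`, hence rational, and an embedding `K → ℂ`
carries it to `c · σ_t(c_1,…,c_n; c)`.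
-/

namespace FourierDedekind

open Polynomial

variable {K L : Type*} [Field K] [Field L] {c : ℕ} {ζ : K}

theorem map_nthRootsFinset_one (φ : K →+* L) (hζ : IsPrimitiveRoot ζ c) :
    (nthRootsFinset c (1 : K)).map ⟨φ, φ.injective⟩ = nthRootsFinset c (1 : L) := by
  refine eq_of_subset_of_card_le (fun y hy => ?_) ?_
  · obtain ⟨x, hx, rfl⟩ := mem_map.1 hy
    exact map_mem_nthRootsFinset_one hx φ
  · classical
    rw [card_map, hζ.card_nthRootsFinset, nthRootsFinset_def]
    exact (Multiset.toFinset_card_le _).trans (card_nthRoots c 1)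

theorem sum_Ico_pow_eq_sum_nthRootsFinset_erase_one {M : Type*} [AddCommMonoid M]
    [DecidableEq K] (hζ : IsPrimitiveRoot ζ c) (f : K → M) :
    ∑ k ∈ Ico 1 c, f (ζ ^ k) = ∑ x ∈ (nthRootsFinset c (1 : K)).erase 1, f x := by
  refine sum_bij (fun k _ => ζ ^ k) (fun k hk => ?_) (fun i hi j hj h => ?_) (fun x hx => ?_)
    fun _ _ => rfl
  · obtain ⟨hk1, hkc⟩ := mem_Ico.1 hk
    refine mem_erase.2 ⟨hζ.pow_ne_one_of_pos_of_lt (by omega) hkc, ?_⟩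
    rw [mem_nthRootsFinset (by omega), ← pow_mul, mul_comm, pow_mul, hζ.pow_eq_one, one_pow]
  · exact hζ.pow_inj (mem_Ico.1 hi).2 (mem_Ico.1 hj).2 h
  · obtain ⟨hx1, hx⟩ := mem_erase.1 hx
    have : NeZero c := ⟨fun h => by simp [h] at hx⟩
    obtain ⟨k, hkc, rfl⟩ := hζ.eq_pow_of_pow_eq_one ((mem_nthRootsFinset (NeZero.pos c) 1).1 hx)
    exact ⟨k, mem_Ico.2 ⟨Nat.pos_of_ne_zero fun h => hx1 (by simp [h]), hkc⟩, rfl⟩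

variable (K) in
noncomputable def rootSum [DecidableEq K] (t : ℤ) {n : ℕ} (cs : Fin n → ℤ) (c : ℕ) : K :=
  ∑ x ∈ (nthRootsFinset c (1 : K)).erase 1, x ^ t / ∏ i, (x ^ cs i - 1)

theorem map_rootSum [DecidableEq K] [DecidableEq L] (φ : K →+* L) (hζ : IsPrimitiveRoot ζ c)
    (t : ℤ) {n : ℕ} (cs : Fin n → ℤ) : φ (rootSum K t cs c) = rootSum L t cs c := by
  simp only [rootSum, map_sum, map_div₀, map_prod, map_sub, map_zpow₀, map_one]
  refine (sum_map _ ⟨φ, φ.injective⟩ fun x : L => x ^ t / ∏ i, (x ^ cs i - 1)).symm.trans ?_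
  rw [map_erase, map_nthRootsFinset_one φ hζ, Function.Embedding.coeFn_mk, map_one]

theorem rootSum_mem_range_algebraMap {F : Type*} [Field F] [Algebra F K] [FiniteDimensional F K]
    [IsGalois F K] [DecidableEq K] (hζ : IsPrimitiveRoot ζ c) (t : ℤ) {n : ℕ} (cs : Fin n → ℤ) :
    rootSum K t cs c ∈ Set.range (algebraMap F K) :=
  (IsGalois.mem_range_algebraMap_iff_fixed _).2 fun σ => map_rootSum (σ : K →+* K) hζ t cs

theorem fourierDedekindSum_eq_rootSum (t : ℤ) {n : ℕ} (cs : Fin n → ℤ) {c : ℕ} (hc : 0 < c) :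
    fourierDedekindSum t cs c = 1 / (c : ℂ) * rootSum ℂ t cs c := by
  have hexp (k : ℕ) : exp (2 * Real.pi * I * k / c) = exp (2 * Real.pi * I / c) ^ k := by
    rw [← exp_nat_mul]
    ring_nf
  simp only [fourierDedekindSum, rootSum, hexp]
  rw [sum_Ico_pow_eq_sum_nthRootsFinset_erase_one (isPrimitiveRoot_exp c hc.ne')
    fun x => x ^ t / ∏ i, (x ^ cs i - 1)]

end FourierDedekind

open FourierDedekind in
theorem fourierDedekindSum_rational_general (t : ℤ) {n : ℕ} (cs : Fin n → ℤ) (c : ℕ) (hc : 0 < c) :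
    ∃ q : ℚ, fourierDedekindSum t cs c = (q : ℂ) := by
  classical
  have : NeZero c := ⟨hc.ne'⟩
  have : IsCyclotomicExtension {c} ℚ (CyclotomicField c ℚ) :=
    CyclotomicField.isCyclotomicExtension c ℚ
  have : IsGalois ℚ (CyclotomicField c ℚ) := IsCyclotomicExtension.isGalois {c} ℚ _
  have hζ := IsCyclotomicExtension.zeta_spec c ℚ (CyclotomicField c ℚ)
  obtain ⟨q, hq⟩ := rootSum_mem_range_algebraMap (F := ℚ) hζ t cs
  refine ⟨q / c, ?_⟩
  let φ : CyclotomicField c ℚ →ₐ[ℚ] ℂ := IsAlgClosed.lift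
  rw [fourierDedekindSum_eq_rootSum t cs hc, ← map_rootSum φ.toRingHom hζ, ← hq]
  simp [div_eq_inv_mul]

theorem fourierDedekindSum_rational (t : ℤ) {n : ℕ} (cs : Fin n → ℤ) (c : ℕ) (hc : 0 < c)
    (hcop : ∀ i, IsCoprime (cs i) (c : ℤ)) :
    ∃ q : ℚ, fourierDedekindSum t cs c = (q : ℂ) :=
  fourierDedekindSum_rational_general t cs c hc
end
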